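/- Let u be a semiclassical moment functional on real polynomials in d variables, with data Φ symmetric d×d of degree p, Ψ of size d×1 with degree q ≥ 1, s = max{p−2, q−1}, let L be the associated second-order operator, and let {ℙ_n}_{n≥0} be a WOPS with respect to u. Then for every n there exist polynomial matrices N_1^n of size r_{n+1}×r_n with deg N_1^n ≤ s−1 and N_2^n of size r_n×r_n with deg N_2^n ≤ s such that L[ℙ_n^t] = ℙ_{n+1}^t N_1^n + ℙ_n^t N_2^n. -/

import Mathlib

open MvPolynomial Matrix Finset MeasureTheory

noncomputable section

/-- Real polynomials in `d` variables. -/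
abbrev MPoly (d : ℕ) := MvPolynomial (Fin d) ℝ

/-- A moment functional: a linear functional on `MPoly d`. -/
abbrev MomF (d : ℕ) := MPoly d →ₗ[ℝ] ℝ

/-- `r_n = binom(n + d - 1, n)`, the dimension of the space of homogeneous
polynomials of degree `n` in `d` variables. -/
def rdim (d n : ℕ) : ℕ := (n + d - 1).choose n

/-- Entrywise application of a moment functional to a polynomial matrix. -/
def mApply {d : ℕ} (u : MomF d) {m n : Type*} (M : Matrix m n (MPoly d)) : Matrix m n ℝ :=
  Matrix.of fun i j => u (M i j)

/-- The matrix Pearson equation `div(Φ u) = Ψᵗ u`, i.e. `⟨u, Φ ∇f + Ψ f⟩ = 0`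
for every polynomial `f` (a system of `d` scalar equations). -/
def Pearson {d : ℕ} (u : MomF d) (Φ : Matrix (Fin d) (Fin d) (MPoly d))
    (Ψ : Fin d → MPoly d) : Prop :=
  ∀ f : MPoly d, ∀ i : Fin d, u (∑ j, Φ i j * pderiv j f + Ψ i * f) = 0

/-- Degree of a polynomial matrix: max of total degrees of the entries. -/
def matDeg {d : ℕ} {m n : Type*} [Fintype m] [Fintype n]
    (M : Matrix m n (MPoly d)) : ℕ :=
  Finset.univ.sup fun p : m × n => (M p.1 p.2).totalDegree

/-- Degree of a polynomial (column) vector. -/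
def vecDeg {d : ℕ} {m : Type*} [Fintype m] (v : m → MPoly d) : ℕ :=
  Finset.univ.sup fun i => (v i).totalDegree

/-- The Jacobian `∇ℙᵗ`: the `d × m` matrix with `(i,k)` entry `∂ᵢ P k`. -/
def gradT {d m : ℕ} (P : Fin m → MPoly d) : Matrix (Fin d) (Fin m) (MPoly d) :=
  Matrix.of fun i k => pderiv i (P k)

/-- The Kronecker product `I_d ⊗ ℙᵗ`: the block-diagonal `d × (d·m)` matrix
whose `d` diagonal blocks equal the row vector `ℙᵗ`. -/
def kronIdRow {d m : ℕ} (P : Fin m → MPoly d) :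
    Matrix (Fin d) (Fin d × Fin m) (MPoly d) :=
  Matrix.of fun i jk => if i = jk.1 then P jk.2 else 0

/-- A constant real matrix viewed as a polynomial matrix. -/
def cmap {d : ℕ} {m n : Type*} (F : Matrix m n ℝ) : Matrix m n (MPoly d) :=
  F.map MvPolynomial.C

/-- `{ℙ_n}` is a weak orthogonal polynomial system with respect to `u`:
each entry of `ℙ_n` has total degree `n`, the entries of `ℙ_0, …, ℙ_n` form a
basis of the polynomials of total degree at most `n` (spanning + linear
independence), `⟨u, ℙ_n ℙ_mᵗ⟩ = 0` for `n ≠ m`, and `H_n = ⟨u, ℙ_n ℙ_nᵗ⟩` is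
nonsingular. -/
structure IsWOPS {d : ℕ} (u : MomF d) (P : (n : ℕ) → Fin (rdim d n) → MPoly d) : Prop where
  deg : ∀ n k, (P n k).totalDegree = n
  span : ∀ n : ℕ, MvPolynomial.restrictTotalDegree (Fin d) ℝ n ≤
    Submodule.span ℝ {g | ∃ m ≤ n, ∃ k, P m k = g}
  indep : LinearIndependent ℝ (fun p : (n : ℕ) × Fin (rdim d n) => P p.1 p.2)
  orth : ∀ m n, m ≠ n → ∀ j k, u (P m j * P n k) = 0
  Hdet : ∀ n, (Matrix.of fun j k : Fin (rdim d n) => u (P n j * P n k)).det ≠ 0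

/-- The matrix `H_n = ⟨u, ℙ_n ℙ_nᵗ⟩`. -/
def Hmat {d : ℕ} (u : MomF d) (P : (n : ℕ) → Fin (rdim d n) → MPoly d) (n : ℕ) :
    Matrix (Fin (rdim d n)) (Fin (rdim d n)) ℝ :=
  Matrix.of fun j k => u (P n j * P n k)

/-- The second-order differential operator
`L[f] = Σ_{i,j} φ_ij ∂²f/∂xᵢ∂xⱼ + Σ_i ψ_i ∂f/∂xᵢ` associated with `Φ`, `Ψ`. -/
def Lop {d : ℕ} (Φ : Matrix (Fin d) (Fin d) (MPoly d)) (Ψ : Fin d → MPoly d)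
    (f : MPoly d) : MPoly d :=
  (∑ i, ∑ j, Φ i j * pderiv i (pderiv j f)) + ∑ i, Ψ i * pderiv i f

/-!
`L` is symmetric with respect to `u` (Green's formula combined with the Pearson equation) and
raises total degrees by at most `s`. Split `L[ℙ_n]` as `ℙ_{n+1}ᵗ A` with `deg A ≤ s - 1` plus a
polynomial `g` of degree `≤ n`. By symmetry, `⟨u, ℙ_m L[ℙ_n]ᵗ⟩ = ⟨u, L[ℙ_m] ℙ_nᵗ⟩ = 0` for
`m + s < n`, so `g` only has components along `ℙ_m` with `n - s ≤ m ≤ n`. Each such `ℙ_m` equals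
`ℙ_{n+1}ᵗ N₁ + ℙ_nᵗ N₂` with `deg N₁ < n - m` and `deg N₂ ≤ n - m`, by descending induction on `m`
through the three-term relation `xᵢ ℙ_{m+1} = A ℙ_{m+2} + B ℙ_{m+1} + C ℙ_m`: the stacked matrix
`C` has full column rank, hence a left inverse, which recovers `ℙ_m`.
-/

theorem Fintype.linearCombination_mem {R M ι : Type*} [Semiring R] [AddCommMonoid M] [Module R M]
    [Fintype ι] {V : Submodule R M} {Q : ι → M} (hQ : ∀ a, Q a ∈ V) (w : ι → R) :
    Fintype.linearCombination R Q w ∈ V :=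
  sum_mem fun a _ => V.smul_mem (w a) (hQ a)

theorem Matrix.vecMul_surjective_of_mulVec_injective {m n K : Type*} [Field K] [Fintype m]
    [Fintype n] {A : Matrix m n K} (hA : Function.Injective A.mulVec) :
    Function.Surjective A.vecMul := by
  have hrank : Aᵀ.rank = Fintype.card n := by
    rw [rank_transpose, rank, LinearMap.finrank_range_of_inj hA, Module.finrank_fintype_fun_eq_card]
  have htop : LinearMap.range Aᵀ.mulVecLin = ⊤ :=
    Submodule.eq_top_of_finrank_eq (by rw [← rank, hrank, Module.finrank_fintype_fun_eq_card])
  intro y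
  obtain ⟨x, hx⟩ := LinearMap.range_eq_top.mp htop y
  exact ⟨x, (mulVec_transpose A x).symm.trans hx⟩

theorem MvPolynomial.pderiv_pderiv_comm {σ R : Type*} [CommSemiring R] (i j : σ)
    (f : MvPolynomial σ R) : pderiv i (pderiv j f) = pderiv j (pderiv i f) := by
  classical
  induction f using MvPolynomial.induction_on' with
  | monomial α c =>
    rcases eq_or_ne i j with rfl | hij
    · rfl
    simp only [pderiv_monomial, Finsupp.tsub_apply, Finsupp.single_eq_of_ne hij,
      Finsupp.single_eq_of_ne hij.symm, tsub_zero, tsub_right_comm, mul_right_comm]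
  | add f g hf hg => simp only [map_add, hf, hg]

-- Indexed by `ℤ` so that `degLE d (-1) = ⊥` encodes the vanishing of `N₁` when `s = 0`.
def degLE (d : ℕ) (t : ℤ) : Submodule ℝ (MPoly d) :=
  restrictSupport ℝ {α | (α.degree : ℤ) ≤ t}

section degLE

variable {d : ℕ} {t e : ℤ} {f g : MPoly d}

theorem mem_degLE : f ∈ degLE d t ↔ ∀ α ∈ f.support, (α.degree : ℤ) ≤ t :=
  mem_restrictSupport_iff ℝ

theorem mem_degLE_natCast {N : ℕ} : f ∈ degLE d N ↔ f.totalDegree ≤ N := by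
  simp only [mem_degLE, Nat.cast_le, totalDegree, Finset.sup_le_iff]
  rfl

theorem eq_zero_or_totalDegree_le_of_mem_degLE (hf : f ∈ degLE d t) :
    f = 0 ∨ (f.totalDegree : ℤ) ≤ t := by
  rcases eq_or_ne f 0 with rfl | hf0
  · exact Or.inl rfl
  obtain ⟨α, hα, hdeg⟩ := Finset.exists_mem_eq_sup f.support (support_nonempty.mpr hf0)
    fun α => α.sum fun _ e => e
  refine Or.inr ?_
  unfold totalDegree
  rw [hdeg]
  exact mem_degLE.mp hf α hα

theorem monomial_mem_degLE {α : Fin d →₀ ℕ} (h : (α.degree : ℤ) ≤ t) (c : ℝ) :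
    monomial α c ∈ degLE d t :=
  (monomial_mem_restrictSupport ℝ).mpr (Or.inl h)

theorem degLE_mono : Monotone (degLE d) := fun _ _ h =>
  restrictSupport_mono ℝ fun _ hα => le_trans (α := ℤ) hα h

theorem mul_mem_degLE (hf : f ∈ degLE d e) (hg : g ∈ degLE d t) : f * g ∈ degLE d (e + t) := by
  classical
  refine mem_degLE.mpr fun γ hγ => ?_
  obtain ⟨α, hα, β, hβ, rfl⟩ := Finset.mem_add.mp (support_mul f g hγ)
  rw [map_add, Nat.cast_add]
  exact add_le_add (mem_degLE.mp hf α hα) (mem_degLE.mp hg β hβ)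

theorem X_mem_degLE (i : Fin d) : X i ∈ degLE d 1 := by
  simpa using mem_degLE_natCast.mpr (totalDegree_X (R := ℝ) i).le

theorem C_mem_degLE (a : ℝ) : C a ∈ degLE d 0 := by
  simpa using mem_degLE_natCast.mpr (totalDegree_C (σ := Fin d) a).le

theorem pderiv_mem_degLE (i : Fin d) (hf : f ∈ degLE d t) : pderiv i f ∈ degLE d (t - 1) := by
  refine mem_degLE.mpr fun α hα => ?_
  rw [mem_support_iff, coeff_pderiv] at hα
  have h := mem_degLE.mp hf (α + Finsupp.single i 1) (mem_support_iff.mpr (left_ne_zero_of_mul hα))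
  rw [map_add, Finsupp.degree_single] at h
  push_cast at h
  linarith

theorem mem_degLE_of_X_mul_mem (i : Fin d) (h : X i * f ∈ degLE d t) : f ∈ degLE d (t - 1) := by
  refine mem_degLE.mpr fun α hα => ?_
  have hX := mem_degLE.mp h (Finsupp.single i 1 + α)
    (by rw [mem_support_iff, coeff_X_mul]; exact mem_support_iff.mp hα)
  rw [map_add, Finsupp.degree_single] at hX
  push_cast at hX
  linarith

end degLE

def combDegLE {d : ℕ} {ι : Type*} [Fintype ι] (Q : ι → MPoly d) (t : ℤ) :
    Submodule ℝ (MPoly d) where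
  carrier := {f | ∃ A : ι → MPoly d, (∀ a, A a ∈ degLE d t) ∧ ∑ a, Q a * A a = f}
  add_mem' := by
    rintro _ _ ⟨A, hA, rfl⟩ ⟨B, hB, rfl⟩
    exact ⟨A + B, fun a => add_mem (hA a) (hB a),
      by simp only [Pi.add_apply, mul_add, sum_add_distrib]⟩
  zero_mem' := ⟨0, fun _ => zero_mem _, by simp⟩
  smul_mem' := by
    rintro c _ ⟨A, hA, rfl⟩
    exact ⟨c • A, fun a => Submodule.smul_mem _ c (hA a),
      by simp only [Pi.smul_apply, mul_smul_comm, smul_sum]⟩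

section combDegLE

variable {d : ℕ} {ι : Type*} [Fintype ι] {Q : ι → MPoly d} {t t' : ℤ} {f : MPoly d}

theorem combDegLE_mono (h : t ≤ t') : combDegLE Q t ≤ combDegLE Q t' := by
  rintro _ ⟨A, hA, rfl⟩
  exact ⟨A, fun a => degLE_mono h (hA a), rfl⟩

theorem X_mul_mem_combDegLE (i : Fin d) (hf : f ∈ combDegLE Q t) :
    X i * f ∈ combDegLE Q (t + 1) := by
  obtain ⟨A, hA, rfl⟩ := hf
  refine ⟨fun a => X i * A a, fun a => ?_, ?_⟩
  · simpa [add_comm] using mul_mem_degLE (X_mem_degLE i) (hA a)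
  · simp only [mul_sum, mul_left_comm]

theorem linearCombination_mem_combDegLE (ht : 0 ≤ t) (w : ι → ℝ) :
    Fintype.linearCombination ℝ Q w ∈ combDegLE Q t := by
  refine ⟨fun a => C (w a), fun a => degLE_mono ht (C_mem_degLE _), ?_⟩
  simp only [Fintype.linearCombination_apply, smul_eq_C_mul, mul_comm]

end combDegLE

/-- The polynomials `ℙ_{n+1}ᵗ N₁ + ℙ_nᵗ N₂` with `deg N₁ ≤ t - 1` and `deg N₂ ≤ t`. -/
def twoTermSpan {d : ℕ} (P : (n : ℕ) → Fin (rdim d n) → MPoly d) (n : ℕ) (t : ℤ) :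
    Submodule ℝ (MPoly d) :=
  combDegLE (P (n + 1)) (t - 1) ⊔ combDegLE (P n) t

section twoTermSpan

variable {d : ℕ} {P : (n : ℕ) → Fin (rdim d n) → MPoly d} {n : ℕ} {t t' : ℤ} {f : MPoly d}

theorem twoTermSpan_mono (h : t ≤ t') : twoTermSpan P n t ≤ twoTermSpan P n t' :=
  sup_le_sup (combDegLE_mono (by omega)) (combDegLE_mono h)

theorem X_mul_mem_twoTermSpan (i : Fin d) (hf : f ∈ twoTermSpan P n t) :
    X i * f ∈ twoTermSpan P n (t + 1) := by
  obtain ⟨g, hg, h, hh, rfl⟩ := Submodule.mem_sup.mp hf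
  rw [mul_add]
  exact add_mem (Submodule.mem_sup_left (by simpa using X_mul_mem_combDegLE i hg))
    (Submodule.mem_sup_right (X_mul_mem_combDegLE i hh))

theorem P_mem_twoTermSpan (j : Fin (rdim d n)) : P n j ∈ twoTermSpan P n 0 :=
  Submodule.mem_sup_right <| by
    simpa using linearCombination_mem_combDegLE (Q := P n) le_rfl (Pi.single j 1)

theorem P_succ_mem_twoTermSpan (j : Fin (rdim d (n + 1))) : P (n + 1) j ∈ twoTermSpan P n 1 :=
  Submodule.mem_sup_left <| by
    simpa using linearCombination_mem_combDegLE (Q := P (n + 1)) le_rfl (Pi.single j 1)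

theorem exists_of_mem_twoTermSpan (hf : f ∈ twoTermSpan P n t) :
    ∃ A : Fin (rdim d (n + 1)) → MPoly d, ∃ B : Fin (rdim d n) → MPoly d,
      (∀ a, A a ∈ degLE d (t - 1)) ∧ (∀ a, B a ∈ degLE d t) ∧
      f = (∑ a, P (n + 1) a * A a) + ∑ a, P n a * B a := by
  obtain ⟨_, ⟨A, hA, rfl⟩, _, ⟨B, hB, rfl⟩, rfl⟩ := Submodule.mem_sup.mp hf
  exact ⟨A, B, hA, hB, rfl⟩

end twoTermSpan

section Lop

variable {d : ℕ} {u : MomF d} {Φ : Matrix (Fin d) (Fin d) (MPoly d)} {Ψ : Fin d → MPoly d}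

-- Green's formula: the Pearson equation applied to `f ∂ᵢg`, summed over `i`.
theorem Pearson.moment_mul_Lop (hP : Pearson u Φ Ψ) (f g : MPoly d) :
    u (f * Lop Φ Ψ g) = -u (∑ i, ∑ j, Φ i j * (pderiv j f * pderiv i g)) := by
  have hsum : u (∑ i, (∑ j, Φ i j * pderiv j (f * pderiv i g) + Ψ i * (f * pderiv i g))) = 0 := by
    rw [map_sum]
    exact sum_eq_zero fun i _ => hP (f * pderiv i g) i
  rw [eq_neg_iff_add_eq_zero, ← map_add, ← hsum]
  congr 1
  have hcomm : ∀ i j, f * (Φ i j * pderiv i (pderiv j g)) = Φ i j * (f * pderiv j (pderiv i g)) :=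
    fun i j => by rw [pderiv_pderiv_comm, mul_left_comm]
  simp only [Lop, pderiv_mul, mul_add, mul_sum, sum_add_distrib, hcomm, mul_left_comm f (Ψ _)]
  abel

theorem Pearson.moment_mul_Lop_comm (hP : Pearson u Φ Ψ) (hΦ : Φ.IsSymm) (f g : MPoly d) :
    u (f * Lop Φ Ψ g) = u (g * Lop Φ Ψ f) := by
  rw [hP.moment_mul_Lop, hP.moment_mul_Lop, sum_comm]
  refine congrArg (fun p => -u p) (sum_congr rfl fun i _ => sum_congr rfl fun j _ => ?_)
  rw [hΦ.apply i j, mul_comm (pderiv i f)]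

theorem Lop_mem_degLE {s t : ℤ} (hΦ : ∀ i j, Φ i j ∈ degLE d (s + 2))
    (hΨ : ∀ i, Ψ i ∈ degLE d (s + 1)) {f : MPoly d} (hf : f ∈ degLE d t) :
    Lop Φ Ψ f ∈ degLE d (t + s) := by
  refine add_mem (sum_mem fun i _ => sum_mem fun j _ => ?_) (sum_mem fun i _ => ?_)
  · exact degLE_mono (by omega)
      (mul_mem_degLE (hΦ i j) (pderiv_mem_degLE i (pderiv_mem_degLE j hf)))
  · exact degLE_mono (by omega) (mul_mem_degLE (hΨ i) (pderiv_mem_degLE i hf))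

end Lop

section Moments

variable {d : ℕ}

local notation "lc" => Fintype.linearCombination ℝ

theorem moment_linearCombination_mul {ι : Type*} [Fintype ι] (u : MomF d) (Q : ι → MPoly d)
    (w : ι → ℝ) (g : MPoly d) : u (lc Q w * g) = w ⬝ᵥ fun a => u (Q a * g) := by
  simp only [Fintype.linearCombination_apply, sum_mul, map_sum, smul_mul_assoc, map_smul,
    smul_eq_mul, dotProduct]

theorem moment_P_mul_linearCombination (u : MomF d) (P : (n : ℕ) → Fin (rdim d n) → MPoly d)
    (m : ℕ) (j : Fin (rdim d m)) (w : Fin (rdim d m) → ℝ) :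
    u (P m j * lc (P m) w) = (Hmat u P m *ᵥ w) j := by
  simp only [Fintype.linearCombination_apply, mul_sum, map_sum, mul_smul_comm, map_smul,
    smul_eq_mul, mulVec, dotProduct, Hmat, of_apply, mul_comm (w _)]

namespace IsWOPS

variable {u : MomF d} {P : (n : ℕ) → Fin (rdim d n) → MPoly d}

theorem P_mem_degLE (hW : IsWOPS u P) (m : ℕ) (k : Fin (rdim d m)) : P m k ∈ degLE d m :=
  mem_degLE_natCast.mpr (hW.deg m k).le

theorem linearCombination_P_mem_degLE (hW : IsWOPS u P) (m : ℕ) (w : Fin (rdim d m) → ℝ) :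
    lc (P m) w ∈ degLE d m :=
  Fintype.linearCombination_mem (hW.P_mem_degLE m) w

theorem isUnit_Hmat (hW : IsWOPS u P) (m : ℕ) : IsUnit (Hmat u P m) :=
  (isUnit_iff_isUnit_det _).mpr (hW.Hdet m).isUnit

theorem Hmat_mulVec_injective (hW : IsWOPS u P) (m : ℕ) :
    Function.Injective (Hmat u P m).mulVec :=
  mulVec_injective_iff_isUnit.mpr (hW.isUnit_Hmat m)

theorem moment_P_mul_linearCombination_of_ne (hW : IsWOPS u P) {l m : ℕ} (h : l ≠ m)
    (j : Fin (rdim d l)) (w : Fin (rdim d m) → ℝ) : u (P l j * lc (P m) w) = 0 := by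
  simp only [Fintype.linearCombination_apply, mul_sum, map_sum, mul_smul_comm, map_smul,
    hW.orth l m h, smul_zero, sum_const_zero]

theorem moment_P_mul_expansion (hW : IsWOPS u P) {S : Finset ℕ} {m : ℕ} (hm : m ∈ S)
    (c : (l : ℕ) → Fin (rdim d l) → ℝ) (j : Fin (rdim d m)) :
    u (P m j * ∑ l ∈ S, lc (P l) (c l)) = (Hmat u P m *ᵥ c m) j := by
  rw [mul_sum, map_sum, sum_eq_single_of_mem m hm fun l _ hl =>
    hW.moment_P_mul_linearCombination_of_ne hl.symm j (c l)]
  exact moment_P_mul_linearCombination u P m j (c m)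

theorem exists_expansion (hW : IsWOPS u P) {N : ℕ} {f : MPoly d} (hf : f ∈ degLE d N) :
    ∃ c : (m : ℕ) → Fin (rdim d m) → ℝ, f = ∑ m ∈ range (N + 1), lc (P m) (c m) := by
  have hmem := hW.span N ((mem_restrictTotalDegree _ _ f).mpr (mem_degLE_natCast.mp hf))
  have hset : {g | ∃ m ≤ N, ∃ k, P m k = g}
      = (fun p : (m : ℕ) × Fin (rdim d m) => P p.1 p.2) '' {p | p.1 ≤ N} := by
    ext g
    constructor
    · rintro ⟨m, hm, k, rfl⟩
      exact ⟨⟨m, k⟩, hm, rfl⟩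
    · rintro ⟨⟨m, k⟩, hm, rfl⟩
      exact ⟨m, hm, k, rfl⟩
  rw [hset, Finsupp.mem_span_image_iff_linearCombination] at hmem
  obtain ⟨l, hl, rfl⟩ := hmem
  refine ⟨fun m k => l ⟨m, k⟩, ?_⟩
  have hsupp : l.support ⊆ (range (N + 1)).sigma fun m => univ := fun p hp => by
    simpa [Nat.lt_succ_iff] using hl hp
  rw [Finsupp.linearCombination_apply, Finsupp.sum,
    sum_subset hsupp fun p _ hp => by simp [Finsupp.notMem_support_iff.mp hp], sum_sigma]
  rfl

theorem expansion_mem_degLE (hW : IsWOPS u P) (N : ℕ) (c : (m : ℕ) → Fin (rdim d m) → ℝ) :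
    ∑ m ∈ range (N + 1), lc (P m) (c m) ∈ degLE d N :=
  sum_mem fun m hm => sum_mem fun k _ => Submodule.smul_mem _ _ <|
    degLE_mono (by simpa [Nat.lt_succ_iff] using hm) (hW.P_mem_degLE m k)

theorem moment_P_mul_eq_zero_of_mem_degLE (hW : IsWOPS u P) {m : ℕ} {h : MPoly d}
    (hh : h ∈ degLE d (m - 1)) (j : Fin (rdim d m)) : u (P m j * h) = 0 := by
  rcases m with _ | m
  · obtain rfl | hlt := eq_zero_or_totalDegree_le_of_mem_degLE hh
    · rw [mul_zero, map_zero]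
    · omega
  obtain ⟨c, rfl⟩ := hW.exists_expansion (N := m) (by simpa using hh)
  rw [mul_sum, map_sum]
  exact sum_eq_zero fun l hl =>
    hW.moment_P_mul_linearCombination_of_ne (by simp at hl; omega) j (c l)

theorem exists_expansion_Ico (hW : IsWOPS u P) {M N : ℕ} {f : MPoly d} (hf : f ∈ degLE d N)
    (horth : ∀ m < M, ∀ j, u (P m j * f) = 0) :
    ∃ c : (m : ℕ) → Fin (rdim d m) → ℝ, f = ∑ m ∈ Ico M (N + 1), lc (P m) (c m) := by
  obtain ⟨c, rfl⟩ := hW.exists_expansion hf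
  have hsub : Ico M (N + 1) ⊆ range (N + 1) := fun m hm => by simp at hm ⊢; omega
  refine ⟨c, (sum_subset hsub fun m hm hmM => ?_).symm⟩
  have hm' : m < M := by simp at hm hmM; omega
  suffices c m = 0 by rw [this, map_zero]
  refine hW.Hmat_mulVec_injective m (funext fun j => ?_)
  rw [mulVec_zero, Pi.zero_apply, ← hW.moment_P_mul_expansion hm c j]
  exact horth m hm' j

theorem mem_degLE_of_orthogonal (hW : IsWOPS u P) {N : ℕ} {f : MPoly d}
    (hf : f ∈ degLE d (N + 1)) (horth : ∀ a, u (P (N + 1) a * f) = 0) : f ∈ degLE d N := by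
  obtain ⟨c, rfl⟩ := hW.exists_expansion (N := N + 1) (by simpa using hf)
  have hc : c (N + 1) = 0 := by
    refine hW.Hmat_mulVec_injective (N + 1) (funext fun j => ?_)
    rw [mulVec_zero, Pi.zero_apply, ← hW.moment_P_mul_expansion (self_mem_range_succ (N + 1)) c j]
    exact horth j
  rw [sum_range_succ, hc, map_zero, add_zero]
  exact hW.expansion_mem_degLE N c

theorem degLE_succ_le (hW : IsWOPS u P) (n : ℕ) :
    degLE d (n + 1) ≤ combDegLE (P (n + 1)) 0 ⊔ degLE d n := fun f hf => by
  obtain ⟨c, rfl⟩ := hW.exists_expansion (N := n + 1) (by simpa using hf)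
  rw [sum_range_succ]
  exact add_mem (Submodule.mem_sup_right (hW.expansion_mem_degLE n c))
    (Submodule.mem_sup_left (linearCombination_mem_combDegLE le_rfl _))

theorem X_mul_mem_combDegLE_sup (hW : IsWOPS u P) (i : Fin d) {n t : ℕ} {f : MPoly d}
    (hf : f ∈ combDegLE (P (n + 1)) (t - 1) ⊔ degLE d n) :
    X i * f ∈ combDegLE (P (n + 1)) t ⊔ degLE d n := by
  obtain ⟨y, hy, g, hg, rfl⟩ := Submodule.mem_sup.mp hf
  have hXg : X i * g ∈ degLE d (n + 1) := by
    simpa [add_comm] using mul_mem_degLE (X_mem_degLE i) hg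
  rw [mul_add]
  exact add_mem (Submodule.mem_sup_left (by simpa using X_mul_mem_combDegLE i hy))
    (sup_le_sup_right (combDegLE_mono (by omega)) _ (hW.degLE_succ_le n hXg))

theorem degLE_le_combDegLE_sup (hW : IsWOPS u P) (n t : ℕ) :
    degLE d (n + t) ≤ combDegLE (P (n + 1)) (t - 1) ⊔ degLE d n := by
  induction t with
  | zero => simp
  | succ t ih =>
    rw [degLE, restrictSupport_eq_span, Submodule.span_le]
    rintro _ ⟨α, hα, rfl⟩
    by_cases hαn : (α.degree : ℤ) ≤ n
    · exact Submodule.mem_sup_right (monomial_mem_degLE hαn 1)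
    obtain ⟨i, hi⟩ : ∃ i, α i ≠ 0 := by
      by_contra! h0
      exact hαn (by simp [show α = 0 from Finsupp.ext h0])
    have hsplit : α = Finsupp.single i 1 + (α - Finsupp.single i 1) :=
      (add_tsub_cancel_of_le (Finsupp.single_le_iff.mpr (Nat.one_le_iff_ne_zero.mpr hi))).symm
    have hdeg := congrArg Finsupp.degree hsplit
    rw [map_add, Finsupp.degree_single] at hdeg
    dsimp only
    rw [hsplit, monomial_single_add, pow_one, Nat.cast_succ, add_sub_cancel_right]
    refine hW.X_mul_mem_combDegLE_sup i (ih (monomial_mem_degLE ?_ 1))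
    simp only [Set.mem_ofPred_eq] at hα
    omega

theorem exists_threeTerm (hW : IsWOPS u P) {m : ℕ} (i : Fin d) (a : Fin (rdim d (m + 1))) :
    ∃ A B C, X i * P (m + 1) a = lc (P (m + 2)) A + lc (P (m + 1)) B + lc (P m) C := by
  have hdeg : X i * P (m + 1) a ∈ degLE d (m + 2 : ℕ) :=
    degLE_mono (by push_cast; omega) (mul_mem_degLE (X_mem_degLE i) (hW.P_mem_degLE (m + 1) a))
  obtain ⟨c, hc⟩ := hW.exists_expansion_Ico (M := m) hdeg fun l hl j => by
    rw [show P l j * (X i * P (m + 1) a) = P (m + 1) a * (X i * P l j) by ring]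
    exact hW.moment_P_mul_eq_zero_of_mem_degLE
      (degLE_mono (by push_cast; omega) (mul_mem_degLE (X_mem_degLE i) (hW.P_mem_degLE l j))) a
  refine ⟨c (m + 2), c (m + 1), c m, ?_⟩
  rw [hc, sum_Ico_succ_top (by omega), sum_Ico_succ_top (by omega), sum_Ico_succ_top le_rfl,
    Ico_self, sum_empty, zero_add]
  abel

theorem threeTerm_mulVec_injective (hW : IsWOPS u P) (hd : 0 < d) {m : ℕ}
    {A : Fin d × Fin (rdim d (m + 1)) → Fin (rdim d (m + 2)) → ℝ}
    {B : Fin d × Fin (rdim d (m + 1)) → Fin (rdim d (m + 1)) → ℝ}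
    {C : Matrix (Fin d × Fin (rdim d (m + 1))) (Fin (rdim d m)) ℝ}
    (h : ∀ z, X z.1 * P (m + 1) z.2 =
      lc (P (m + 2)) (A z) + lc (P (m + 1)) (B z) + lc (P m) (C z)) :
    Function.Injective C.mulVec := by
  -- If `C (H w) = 0`, then every `xᵢ (wᵗ ℙ_m)` is orthogonal to `ℙ_{m+1}`, so has degree `≤ m`;
  -- thus `wᵗ ℙ_m` has degree `< m`, and is orthogonal to `ℙ_m`, which forces `H w = 0`.
  refine (injective_iff_map_eq_zero C.mulVecLin).mpr fun v hv => ?_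
  obtain ⟨w, rfl⟩ := mulVec_surjective_iff_isUnit.mpr (hW.isUnit_Hmat m) v
  have horth : ∀ z : Fin d × Fin (rdim d (m + 1)),
      u (P (m + 1) z.2 * (X z.1 * lc (P m) w)) = 0 := by
    intro z
    rw [← mul_assoc, mul_comm (P _ _), h z, add_mul, add_mul, map_add, map_add,
      moment_linearCombination_mul, moment_linearCombination_mul, moment_linearCombination_mul]
    simp only [hW.moment_P_mul_linearCombination_of_ne (show m + 2 ≠ m by omega),
      hW.moment_P_mul_linearCombination_of_ne (show m + 1 ≠ m by omega),
      moment_P_mul_linearCombination, ← Pi.zero_def, dotProduct_zero, zero_add]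
    have hz := congrFun hv z
    rw [mulVecLin_apply, Pi.zero_apply] at hz
    exact hz
  let i₀ : Fin d := ⟨0, hd⟩
  have hdeg : X i₀ * lc (P m) w ∈ degLE d (m + 1) := by
    simpa [add_comm] using mul_mem_degLE (X_mem_degLE i₀) (hW.linearCombination_P_mem_degLE m w)
  have hX : X i₀ * lc (P m) w ∈ degLE d m :=
    hW.mem_degLE_of_orthogonal hdeg fun a => horth (i₀, a)
  have hg : lc (P m) w ∈ degLE d (m - 1) := mem_degLE_of_X_mul_mem i₀ hX
  funext j
  rw [← moment_P_mul_linearCombination u P m j w, Pi.zero_apply]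
  exact hW.moment_P_mul_eq_zero_of_mem_degLE hg j

theorem P_mem_of_succ_mem (hW : IsWOPS u P) (hd : 0 < d) {m : ℕ} {V W : Submodule ℝ (MPoly d)}
    (hWV : W ≤ V) (hX : ∀ i, ∀ f ∈ W, X i * f ∈ V) (h₁ : ∀ a, P (m + 1) a ∈ W)
    (h₂ : ∀ a, P (m + 2) a ∈ V) (j : Fin (rdim d m)) : P m j ∈ V := by
  choose A B C hABC using fun z : Fin d × Fin (rdim d (m + 1)) => hW.exists_threeTerm z.1 z.2
  obtain ⟨y, hy⟩ := vecMul_surjective_of_mulVec_injective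
    (hW.threeTerm_mulVec_injective hd (C := of C) hABC) (Pi.single j 1)
  have hC : ∀ z, lc (P m) (C z) ∈ V := fun z => by
    rw [eq_sub_of_add_eq' (hABC z).symm]
    exact sub_mem (hX _ _ (h₁ _)) (add_mem (Fintype.linearCombination_mem h₂ _)
      (hWV (Fintype.linearCombination_mem h₁ _)))
  have hPm : P m j = ∑ z, y z • lc (P m) (C z) := by
    calc P m j = lc (P m) (y ᵥ* of C) := by
          rw [show y ᵥ* of C = Pi.single j 1 from hy, Fintype.linearCombination_apply_single,
            one_smul]
      _ = ∑ z, y z • lc (P m) (C z) := by simp only [vecMul_eq_sum, map_sum, map_smul]; rfl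
  rw [hPm]
  exact sum_mem fun z _ => V.smul_mem _ (hC z)

theorem P_mem_twoTermSpan_of_add_eq (hW : IsWOPS u P) (hd : 0 < d) {m t n : ℕ} (h : m + t = n)
    (j : Fin (rdim d m)) : P m j ∈ twoTermSpan P n t := by
  suffices H : ∀ t m, m + t = n →
      (∀ j, P m j ∈ twoTermSpan P n t) ∧ ∀ a, P (m + 1) a ∈ twoTermSpan P n (t + 1) from
    (H t m h).1 j
  intro t
  induction t with
  | zero =>
    rintro m rfl
    exact ⟨P_mem_twoTermSpan, fun a => by simpa using P_succ_mem_twoTermSpan a⟩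
  | succ t ih =>
    rintro m rfl
    obtain ⟨h₁, h₂⟩ := ih (m + 1) (by ring)
    refine ⟨hW.P_mem_of_succ_mem hd (twoTermSpan_mono (by omega)) (fun i f hf => ?_) h₁ h₂,
      fun a => twoTermSpan_mono (by omega) (h₁ a)⟩
    simpa using X_mul_mem_twoTermSpan i hf

theorem mem_twoTermSpan_of_orthogonal (hW : IsWOPS u P) (hd : 0 < d) {n s : ℕ} {g : MPoly d}
    (hg : g ∈ degLE d n) (horth : ∀ m, m + s < n → ∀ j, u (P m j * g) = 0) :
    g ∈ twoTermSpan P n s := by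
  obtain ⟨c, rfl⟩ := hW.exists_expansion_Ico (M := n - s) hg fun m hm => horth m (by omega)
  refine sum_mem fun m hm => Fintype.linearCombination_mem (fun k => ?_) (c m)
  rw [mem_Ico] at hm
  exact twoTermSpan_mono (by omega)
    (hW.P_mem_twoTermSpan_of_add_eq hd (Nat.add_sub_of_le (by omega)) k)

theorem moment_mul_eq_zero_of_mem_combDegLE (hW : IsWOPS u P) {n : ℕ} {t : ℤ} {y h : MPoly d}
    (hy : y ∈ combDegLE (P (n + 1)) t) (hh : h ∈ degLE d (n - t)) : u (h * y) = 0 := by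
  obtain ⟨A, hA, rfl⟩ := hy
  rw [mul_sum, map_sum]
  refine sum_eq_zero fun a _ => ?_
  rw [mul_left_comm]
  exact hW.moment_P_mul_eq_zero_of_mem_degLE
    (degLE_mono (by push_cast; omega) (mul_mem_degLE hh (hA a))) a

theorem Lop_mem_twoTermSpan (hW : IsWOPS u P) {Φ : Matrix (Fin d) (Fin d) (MPoly d)}
    {Ψ : Fin d → MPoly d} (hΦsym : Φ.IsSymm) (hP : Pearson u Φ Ψ) {s : ℕ}
    (hΦ : ∀ i j, Φ i j ∈ degLE d (s + 2)) (hΨ : ∀ i, Ψ i ∈ degLE d (s + 1)) (n : ℕ)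
    (k : Fin (rdim d n)) : Lop Φ Ψ (P n k) ∈ twoTermSpan P n s := by
  rcases Nat.eq_zero_or_pos d with rfl | hd
  · simp [Lop]
  have hL : ∀ (m : ℕ) j, Lop Φ Ψ (P m j) ∈ degLE d (m + s) := fun m j =>
    Lop_mem_degLE hΦ hΨ (hW.P_mem_degLE m j)
  obtain ⟨y, hy, g, hg, hyg⟩ := Submodule.mem_sup.mp (hW.degLE_le_combDegLE_sup n s (hL n k))
  rw [← hyg]
  refine add_mem (Submodule.mem_sup_left hy) (hW.mem_twoTermSpan_of_orthogonal hd hg ?_)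
  intro m hm j
  have hLk : u (P m j * Lop Φ Ψ (P n k)) = 0 := by
    rw [hP.moment_mul_Lop_comm hΦsym]
    exact hW.moment_P_mul_eq_zero_of_mem_degLE (degLE_mono (by omega) (hL m j)) k
  have hyk : u (P m j * y) = 0 :=
    hW.moment_mul_eq_zero_of_mem_combDegLE hy (degLE_mono (by omega) (hW.P_mem_degLE m j))
  rwa [← hyg, mul_add, map_add, hyk, zero_add] at hLk

end IsWOPS

end Moments

theorem totalDegree_le_matDeg {d : ℕ} {m n : Type*} [Fintype m] [Fintype n]
    (M : Matrix m n (MPoly d)) (i : m) (j : n) : (M i j).totalDegree ≤ matDeg M :=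
  le_sup (f := fun p : m × n => (M p.1 p.2).totalDegree) (mem_univ (i, j))

theorem totalDegree_le_vecDeg {d : ℕ} {m : Type*} [Fintype m] (v : m → MPoly d) (i : m) :
    (v i).totalDegree ≤ vecDeg v :=
  le_sup (f := fun i => (v i).totalDegree) (mem_univ i)

theorem short_differential_difference_relation_general
    {d : ℕ} (u : MomF d) (P : (n : ℕ) → Fin (rdim d n) → MPoly d)
    (hW : IsWOPS u P)
    (Φ : Matrix (Fin d) (Fin d) (MPoly d)) (hΦsym : Φ.IsSymm)
    (Ψ : Fin d → MPoly d)
    (p q : ℕ) (hp : matDeg Φ = p) (hq : vecDeg Ψ = q)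
    (hPearson : Pearson u Φ Ψ)
    (s : ℕ) (hs : s = max (p - 2) (q - 1)) :
    ∀ n : ℕ,
      ∃ N₁ : Matrix (Fin (rdim d (n + 1))) (Fin (rdim d n)) (MPoly d),
      ∃ N₂ : Matrix (Fin (rdim d n)) (Fin (rdim d n)) (MPoly d),
        (∀ a k, N₁ a k = 0 ∨ ((N₁ a k).totalDegree : ℤ) ≤ (s : ℤ) - 1) ∧
        matDeg N₂ ≤ s ∧
        ∀ k, Lop Φ Ψ (P n k) =
          (∑ a, P (n + 1) a * N₁ a k) + ∑ a, P n a * N₂ a k := by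
  intro n
  have hΦ : ∀ i j, Φ i j ∈ degLE d (s + 2) := fun i j => by
    have := totalDegree_le_matDeg Φ i j
    exact_mod_cast mem_degLE_natCast.mpr (show (Φ i j).totalDegree ≤ s + 2 by omega)
  have hΨ : ∀ i, Ψ i ∈ degLE d (s + 1) := fun i => by
    have := totalDegree_le_vecDeg Ψ i
    exact_mod_cast mem_degLE_natCast.mpr (show (Ψ i).totalDegree ≤ s + 1 by omega)
  choose A B hA hB hAB using fun k =>
    exists_of_mem_twoTermSpan (hW.Lop_mem_twoTermSpan hΦsym hPearson hΦ hΨ n k)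
  refine ⟨of fun a k => A k a, of fun a k => B k a, fun a k => ?_, ?_, hAB⟩
  · exact eq_zero_or_totalDegree_le_of_mem_degLE (hA k a)
  · exact Finset.sup_le fun ak _ => mem_degLE_natCast.mp (hB ak.2 ak.1)

/-- **Short differential–difference relation.**
If `u` is semiclassical with data `Φ` (symmetric, degree `p`), `Ψ` (degree
`q ≥ 1`), `s = max{p−2, q−1}`, and `{ℙ_n}` a WOPS for `u`, then for every `n`
there are polynomial matrices `N₁ⁿ` (degree ≤ `s−1`, where zero entries are
allowed regardless) and `N₂ⁿ` (degree ≤ `s`) with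
`L[ℙ_nᵗ] = ℙ_{n+1}ᵗ N₁ⁿ + ℙ_nᵗ N₂ⁿ`. -/
theorem short_differential_difference_relation
    {d : ℕ} (u : MomF d) (P : (n : ℕ) → Fin (rdim d n) → MPoly d)
    (hW : IsWOPS u P)
    (Φ : Matrix (Fin d) (Fin d) (MPoly d)) (hΦsym : Φ.IsSymm)
    (Ψ : Fin d → MPoly d)
    (p q : ℕ) (hp : matDeg Φ = p) (hq : vecDeg Ψ = q) (hq1 : 1 ≤ q)
    (hPearson : Pearson u Φ Ψ)
    (hdet : (mApply u Φ).det ≠ 0)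
    (s : ℕ) (hs : s = max (p - 2) (q - 1)) :
    ∀ n : ℕ,
      ∃ N₁ : Matrix (Fin (rdim d (n + 1))) (Fin (rdim d n)) (MPoly d),
      ∃ N₂ : Matrix (Fin (rdim d n)) (Fin (rdim d n)) (MPoly d),
        (∀ a k, N₁ a k = 0 ∨ ((N₁ a k).totalDegree : ℤ) ≤ (s : ℤ) - 1) ∧
        matDeg N₂ ≤ s ∧
        ∀ k, Lop Φ Ψ (P n k) =
          (∑ a, P (n + 1) a * N₁ a k) + ∑ a, P n a * N₂ a k :=
  short_differential_difference_relation_general u P hW Φ hΦsym Ψ p q hp hq hPearson s hs
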